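/- Let A = sI − B where B is an m×m matrix with nonnegative entries and s > ρ(B). Then the function I ↦ tr(log A[I]) on subsets of {1,...,m} is submodular, where log A := (log s)·Id − Σ_{i≥1} Bⁱ/(i sⁱ). -/

import Mathlib

/-!
Expanding the logarithm, `tr log A[K] = |K| log s - ∑ₙ tr (B[K]ⁿ) / (n sⁿ)`, and `K ↦ |K|` is
modular. For `B ≥ 0`, `tr (B[K]ⁿ)` is the total weight of the closed walks of length `n` inside `K`.
A closed walk inside `I` and inside `J` lies inside `I ∩ J`, and one inside `I` or `J` lies inside
`I ∪ J`, so every `K ↦ tr (B[K]ⁿ)` is supermodular, hence so is the series. All series converge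
because `0 ≤ B[K]ⁿ ≤ Bⁿ` entrywise and, by Gelfand's formula, `Bⁿ = O(rⁿ)` for any `ρ(B) < r < s`.
-/

open Matrix

/-- The principal submatrix of `B` with rows and columns in `I`. -/
def rsub {m : ℕ} (B : Matrix (Fin m) (Fin m) ℝ) (I : Finset (Fin m)) :
    Matrix I I ℝ :=
  B.submatrix (fun i : I => (i : Fin m)) (fun i : I => (i : Fin m))

/-- `log (s·Id − B)`, defined by the series
`(log s)·Id − Σ_{i≥1} Bⁱ/(i sⁱ)`, absolutely convergent when `s > ρ(B)`. -/
noncomputable def mLog {n : Type*} [Fintype n] [DecidableEq n]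
    (s : ℝ) (B : Matrix n n ℝ) : Matrix n n ℝ :=
  (Real.log s) • (1 : Matrix n n ℝ) -
    ∑' i : ℕ, ((1 : ℝ) / ((i + 1) * s ^ (i + 1))) • B ^ (i + 1)

open Finset Filter

theorem Fin.snoc_tail_eq_comp_finRotate {α : Type*} {n : ℕ} (d : Fin (n + 1) → α) :
    Fin.snoc (Fin.tail d) (d 0) = d ∘ finRotate (n + 1) := by
  ext k
  induction k using Fin.lastCases with
  | last => simp
  | cast k => simp [Fin.tail, finRotate_apply, Fin.coeSucc_eq_succ]

theorem Fintype.sum_piFinset_add_sum_piFinset_le {α ι M : Type*} [Fintype α] [DecidableEq α]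
    [DecidableEq ι] [AddCommMonoid M] [PartialOrder M] [IsOrderedAddMonoid M]
    {W : (α → ι) → M} (hW : ∀ d, 0 ≤ W d) (I J : Finset ι) :
    ∑ d ∈ piFinset (fun _ => I), W d + ∑ d ∈ piFinset (fun _ => J), W d ≤
      ∑ d ∈ piFinset (fun _ => I ∪ J), W d + ∑ d ∈ piFinset (fun _ => I ∩ J), W d := by
  rw [← sum_union_inter, piFinset_inter]
  gcongr
  · exact fun d _ _ => hW d
  · exact union_subset (piFinset_subset _ _ fun _ => subset_union_left)
      (piFinset_subset _ _ fun _ => subset_union_right)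

namespace Matrix

section Walks

variable {ι R : Type*} [Fintype ι] [DecidableEq ι] [CommSemiring R]

theorem pow_succ_apply_eq_sum_prod (M : Matrix ι ι R) (n : ℕ) (i j : ι) :
    (M ^ (n + 1)) i j =
      ∑ c : Fin n → ι, ∏ k : Fin (n + 1),
        M ((Fin.cons i c : Fin (n + 1) → ι) k) ((Fin.snoc c j : Fin (n + 1) → ι) k) := by
  induction n generalizing i with
  | zero => simp [Fin.snoc]
  | succ n ih =>
    rw [pow_succ', mul_apply, ← (Fin.consEquiv fun _ => ι).sum_comp, Fintype.sum_prod_type]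
    refine Finset.sum_congr rfl fun t _ => ?_
    rw [ih, Finset.mul_sum]
    refine Finset.sum_congr rfl fun c _ => ?_
    rw [Fin.prod_univ_succ (n := n + 1)]
    simp [Fin.consEquiv, ← Fin.cons_snoc_eq_snoc_cons]

theorem trace_pow_succ_eq_sum_prod_finRotate (M : Matrix ι ι R) (n : ℕ) :
    trace (M ^ (n + 1)) = ∑ d : Fin (n + 1) → ι, ∏ k, M (d k) (d (finRotate (n + 1) k)) := by
  rw [← (Fin.consEquiv fun _ => ι).sum_comp, Fintype.sum_prod_type, trace]
  refine Finset.sum_congr rfl fun i _ => ?_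
  rw [diag_apply, pow_succ_apply_eq_sum_prod]
  refine Finset.sum_congr rfl fun c _ => ?_
  have := Fin.snoc_tail_eq_comp_finRotate (Fin.cons i c : Fin (n + 1) → ι)
  simp only [Fin.tail_cons, Fin.cons_zero] at this
  simp [Fin.consEquiv, this]

end Walks

section LinftyOp

attribute [local instance] Matrix.linftyOpSeminormedAddCommGroup

theorem norm_entry_le_linfty_opNorm {m n α : Type*} [Fintype m] [Fintype n]
    [SeminormedAddCommGroup α] (A : Matrix m n α) (i : m) (j : n) : ‖A i j‖ ≤ ‖A‖ := by
  rw [← coe_nnnorm, ← coe_nnnorm, NNReal.coe_le_coe, linfty_opNNNorm_def]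
  exact (single_le_sum (fun k _ => zero_le) (mem_univ j)).trans
    (le_sup (f := fun i => ∑ k, ‖A i k‖₊) (mem_univ i))

end LinftyOp

theorem eventually_norm_pow_apply_le_of_spectralRadius_lt {ι : Type*} [Fintype ι]
    [DecidableEq ι] (a : Matrix ι ι ℂ) {r : ℝ} (hr : 0 ≤ r)
    (har : spectralRadius ℂ a < ENNReal.ofReal r) :
    ∀ᶠ n in atTop, ∀ i j, ‖(a ^ n) i j‖ ≤ r ^ n := by
  let := Matrix.linftyOpNormedRing (n := ι) (α := ℂ)
  let := Matrix.linftyOpNormedAlgebra (n := ι) (R := ℂ) (α := ℂ)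
  have : CompleteSpace (Matrix ι ι ℂ) := FiniteDimensional.complete ℂ _
  filter_upwards [(spectrum.pow_norm_pow_one_div_tendsto_nhds_spectralRadius a).eventually_lt_const
    har, eventually_gt_atTop 0] with n hn hn0 i j
  rw [ENNReal.ofReal_lt_ofReal_iff', one_div,
    Real.rpow_inv_lt_iff_of_pos (norm_nonneg _) hr (by positivity), Real.rpow_natCast] at hn
  exact (norm_entry_le_linfty_opNorm _ i j).trans hn.1.le

theorem eventually_abs_pow_apply_le_of_spectralRadius_lt {ι : Type*} [Fintype ι]
    [DecidableEq ι] (B : Matrix ι ι ℝ) {r : ℝ} (hr : 0 ≤ r)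
    (hBr : spectralRadius ℂ (B.map Complex.ofReal) < ENNReal.ofReal r) :
    ∀ᶠ n in atTop, ∀ i j, |(B ^ n) i j| ≤ r ^ n := by
  filter_upwards [eventually_norm_pow_apply_le_of_spectralRadius_lt _ hr hBr] with n hn i j
  have hmap : (B ^ n).map Complex.ofReal = B.map Complex.ofReal ^ n :=
    map_pow Complex.ofRealHom.mapMatrix B n
  simpa [← hmap] using hn i j

end Matrix

section mLog

variable {ι : Type*} [Fintype ι] [DecidableEq ι] {s : ℝ}

theorem summable_mLog_series {M : Matrix ι ι ℝ} {r : ℝ} (hr : 0 ≤ r) (hrs : r < s)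
    (hM : ∀ᶠ n in atTop, ∀ i j, |(M ^ n) i j| ≤ r ^ n) :
    Summable fun n : ℕ => ((1 : ℝ) / ((n + 1) * s ^ (n + 1))) • M ^ (n + 1) := by
  have hs : 0 < s := hr.trans_lt hrs
  refine Pi.summable.2 fun i => Pi.summable.2 fun j => ?_
  refine .of_norm_bounded_eventually_nat ((summable_geometric_of_lt_one (div_nonneg hr hs.le)
    ((div_lt_one hs).2 hrs)).mul_left (r / s)) ?_
  filter_upwards [(tendsto_add_atTop_nat 1).eventually hM] with n hn
  have hcoeff : (1 : ℝ) / ((n + 1) * s ^ (n + 1)) ≤ 1 / s ^ (n + 1) :=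
    one_div_le_one_div_of_le (by positivity) (le_mul_of_one_le_left (by positivity) (by simp))
  calc ‖(((1 : ℝ) / ((n + 1) * s ^ (n + 1))) • M ^ (n + 1)) i j‖
      = (1 : ℝ) / ((n + 1) * s ^ (n + 1)) * |(M ^ (n + 1)) i j| := by
        rw [Matrix.smul_apply, smul_eq_mul, norm_mul, Real.norm_eq_abs, Real.norm_eq_abs,
          abs_of_pos (by positivity)]
    _ ≤ 1 / s ^ (n + 1) * r ^ (n + 1) :=
        mul_le_mul hcoeff (hn i j) (abs_nonneg _) (by positivity)
    _ = r / s * (r / s) ^ n := by rw [← pow_succ', div_pow, one_div_mul_eq_div]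

theorem hasSum_trace_mLog_series {M : Matrix ι ι ℝ}
    (hM : Summable fun n : ℕ => ((1 : ℝ) / ((n + 1) * s ^ (n + 1))) • M ^ (n + 1)) :
    HasSum (fun n : ℕ => (1 : ℝ) / ((n + 1) * s ^ (n + 1)) * trace (M ^ (n + 1)))
      (Real.log s * Fintype.card ι - trace (mLog s M)) := by
  convert hM.hasSum.map (traceAddMonoidHom ι ℝ) continuous_id.matrix_trace using 1
  · ext n
    simp [trace_smul]
  · simp [mLog, trace_sub, trace_smul, trace_one]

end mLog

variable {m : ℕ}

theorem trace_rsub_pow_succ_eq_sum_piFinset (B : Matrix (Fin m) (Fin m) ℝ)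
    (K : Finset (Fin m)) (n : ℕ) :
    trace (rsub B K ^ (n + 1)) = ∑ d ∈ Fintype.piFinset (fun _ : Fin (n + 1) => K),
      ∏ k, B (d k) (d (finRotate (n + 1) k)) := by
  rw [trace_pow_succ_eq_sum_prod_finRotate,
    sum_subtype _ fun d => Fintype.mem_piFinset (t := fun _ => K),
    ← (Equiv.subtypePiEquivPi (p := fun _ x => x ∈ K)).symm.sum_comp]
  rfl

theorem trace_rsub_pow_succ_supermodular {B : Matrix (Fin m) (Fin m) ℝ}
    (hB : ∀ i j, 0 ≤ B i j) (I J : Finset (Fin m)) (n : ℕ) :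
    trace (rsub B I ^ (n + 1)) + trace (rsub B J ^ (n + 1)) ≤
      trace (rsub B (I ∪ J) ^ (n + 1)) + trace (rsub B (I ∩ J) ^ (n + 1)) := by
  simp only [trace_rsub_pow_succ_eq_sum_piFinset]
  exact Fintype.sum_piFinset_add_sum_piFinset_le (fun d => prod_nonneg fun k _ => hB _ _) I J

theorem rsub_pow_apply_le {B : Matrix (Fin m) (Fin m) ℝ} (hB : ∀ i j, 0 ≤ B i j)
    (K : Finset (Fin m)) (n : ℕ) (i j : K) : (rsub B K ^ n) i j ≤ (B ^ n) i j := by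
  induction n generalizing j with
  | zero =>
    obtain rfl | hij := eq_or_ne i j
    · simp
    · simp [one_apply_ne hij, one_apply_ne (Subtype.coe_ne_coe.mpr hij)]
  | succ n ih =>
    rw [pow_succ, pow_succ, mul_apply, mul_apply]
    calc ∑ k : K, (rsub B K ^ n) i k * rsub B K k j
        ≤ ∑ k : K, (B ^ n) i k * B k j :=
          sum_le_sum fun k _ => mul_le_mul_of_nonneg_right (ih k) (hB _ _)
      _ = ∑ k ∈ K, (B ^ n) i k * B k j := sum_coe_sort K fun k => (B ^ n) i k * B k j
      _ ≤ ∑ k, (B ^ n) i k * B k j :=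
          sum_le_sum_of_subset_of_nonneg (subset_univ K) fun k _ _ =>
            mul_nonneg (pow_apply_nonneg hB n _ _) (hB _ _)

theorem abs_rsub_pow_apply_le {B : Matrix (Fin m) (Fin m) ℝ} (hB : ∀ i j, 0 ≤ B i j)
    (K : Finset (Fin m)) (n : ℕ) (i j : K) : |(rsub B K ^ n) i j| ≤ |(B ^ n) i j| := by
  rw [abs_of_nonneg (pow_apply_nonneg (A := rsub B K) (fun _ _ => hB _ _) n i j),
    abs_of_nonneg (pow_apply_nonneg hB n i j)]
  exact rsub_pow_apply_le hB K n i j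

/-- For a nonsingular M-matrix `A = s·Id − B` (with `B ≥ 0` entrywise and
`s > ρ(B)`), the set function `I ↦ tr (log A[I])` is submodular, where
`log A[I] = log (s·Id − B[I])` is given by the series above. -/
theorem trace_mmatrix_log_submodular {m : ℕ} (B : Matrix (Fin m) (Fin m) ℝ)
    (hB : ∀ i j, 0 ≤ B i j) (s : ℝ)
    (hs : spectralRadius ℂ (B.map (Complex.ofReal)) < ENNReal.ofReal s)
    (I J : Finset (Fin m)) :
    Matrix.trace (mLog s (rsub B (I ∪ J))) + Matrix.trace (mLog s (rsub B (I ∩ J))) ≤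
      Matrix.trace (mLog s (rsub B I)) + Matrix.trace (mLog s (rsub B J)) := by
  obtain ⟨r, hr, hBr, hrs⟩ := ENNReal.lt_iff_exists_real_btwn.mp hs
  replace hrs : r < s := (ENNReal.ofReal_lt_ofReal_iff'.mp hrs).1
  have hpow := eventually_abs_pow_apply_le_of_spectralRadius_lt B hr hBr
  have hsum (K : Finset (Fin m)) := hasSum_trace_mLog_series (summable_mLog_series hr hrs
    (hpow.mono fun n hn i j => (abs_rsub_pow_apply_le hB K n i j).trans (hn i j)))
  have hs0 : 0 < s := hr.trans_lt hrs
  have hseries := hasSum_le (fun n => by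
      rw [← mul_add, ← mul_add]
      exact mul_le_mul_of_nonneg_left (trace_rsub_pow_succ_supermodular hB I J n) (by positivity))
    ((hsum I).add (hsum J)) ((hsum (I ∪ J)).add (hsum (I ∩ J)))
  have hcard : ((I ∪ J).card + (I ∩ J).card : ℝ) = I.card + J.card := by
    exact_mod_cast card_union_add_card_inter I J
  simp only [Fintype.card_coe] at hseries
  linear_combination hseries + Real.log s * hcard
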